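/- arXiv:1302.3920 — 5 statements merged into one kernel-verified Lean document; each statement's English description precedes it below -/
import Mathlib

section
/- Let α ∉ {0, 1, 2}, and let f : ℝⁿ → ℝ be smooth with ∇f(x₀) ≠ 0 at some point x₀. Let A, B : ℝⁿ → ℝ be smooth functions and c : I → (0,∞) a function on an open interval I with f(x)+k > 0 for all k ∈ I and x near x₀. If c(k)^α = (A(x) k + B(x))^α (k + f(x))^{α-2} holds for all k ∈ I and all x near x₀, then differentiating in x yields α(∇A(x) k + ∇B(x))(k + f(x)) + (α-2)(A(x)k + B(x)) ∇f(x) = 0 for all such k, x, and this forces ∇f(x₀) = 0, a contradiction; hence no such identity can hold. -/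
open Set Real

lemma quad_coeffs_zero {c₂ c₁ c₀ a b : ℝ} (hab : a < b)
    (h : ∀ k ∈ Set.Ioo a b, c₂*k^2 + c₁*k + c₀ = 0) :
    c₂ = 0 ∧ c₁ = 0 ∧ c₀ = 0 := by
  set d := (b - a)/4 with hd
  have hd0 : 0 < d := by simp only [hd]; linarith
  have e1 := h (a + d) ⟨by linarith, by simp only [hd]; linarith⟩
  have e2 := h (a + 2*d) ⟨by linarith, by simp only [hd]; linarith⟩
  have e3 := h (a + 3*d) ⟨by linarith, by simp only [hd]; linarith⟩
  have h2 : c₂ * (2*d^2) = 0 := by linear_combination e1 - 2*e2 + e3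
  have hc2 : c₂ = 0 := by
    rcases mul_eq_zero.1 h2 with h | h
    · exact h
    · nlinarith
  have h1 : c₁ * d = 0 := by linear_combination e2 - e1 - (2*a*d + 3*d^2)*hc2
  have hc1 : c₁ = 0 := by
    rcases mul_eq_zero.1 h1 with h | h
    · exact h
    · exact absurd h hd0.ne'
  have hc0 : c₀ = 0 := by linear_combination e1 - ((a+d)^2)*hc2 - (a+d)*hc1
  exact ⟨hc2, hc1, hc0⟩

/-- If `α ∉ {0,1,2}`, `∇f(x₀) ≠ 0`, then no identity
`c(k)^α = (A x · k + B x)^α (k + f x)^{α-2}` (with `c > 0`) can hold for all `k` in a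
nontrivial open interval and all `x` near `x₀`. -/
theorem stmt6 (n : ℕ) (α : ℝ) (hα0 : α ≠ 0) (hα1 : α ≠ 1) (hα2 : α ≠ 2)
    (f A B : EuclideanSpace ℝ (Fin n) → ℝ)
    (hf : ContDiff ℝ (⊤ : ℕ∞) f) (hA : ContDiff ℝ (⊤ : ℕ∞) A) (hB : ContDiff ℝ (⊤ : ℕ∞) B)
    (x₀ : EuclideanSpace ℝ (Fin n)) (hgrad : gradient f x₀ ≠ 0)
    (a b : ℝ) (hab : a < b) (c : ℝ → ℝ) (hc : ∀ k ∈ Ioo a b, 0 < c k)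
    (U : Set (EuclideanSpace ℝ (Fin n))) (hU : U ∈ nhds x₀)
    (hposf : ∀ k ∈ Ioo a b, ∀ x ∈ U, 0 < f x + k) :
    ¬ (∀ k ∈ Ioo a b, ∀ x ∈ U,
        c k ^ α = (A x * k + B x) ^ α * (k + f x) ^ (α - 2)) := by
  intro H
  have hx₀U : x₀ ∈ U := mem_of_mem_nhds hU
  -- f is nonconstant near x₀
  obtain ⟨x₁, hx₁U, hne⟩ : ∃ x ∈ U, f x ≠ f x₀ := by
    by_contra hcon
    push_neg at hcon
    apply hgrad
    have hev : f =ᶠ[nhds x₀] fun _ => f x₀ := Filter.eventually_of_mem hU hcon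
    rw [hev.gradient_eq, gradient_fun_const]
  set p := f x₀ with hp
  set q := f x₁ with hq
  set a₁ := A x₀ with ha₁d
  set b₁ := B x₀ with hb₁d
  set a₂ := A x₁ with ha₂d
  set b₂ := B x₁ with hb₂d
  -- nonvanishing of the linear factors on the interval
  have hnv : ∀ k ∈ Ioo a b, ∀ x ∈ U, A x * k + B x ≠ 0 := by
    intro k hk x hx h0
    have h1 := H k hk x hx
    rw [h0, Real.zero_rpow hα0, zero_mul] at h1
    exact absurd h1 (ne_of_gt (Real.rpow_pos_of_pos (hc k hk) α))
  -- the key polynomial identity on the interval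
  have star : ∀ k ∈ Ioo a b,
      α*a₁*(a₂*k+b₂)*((k+p)*(k+q)) + (α-2)*((a₁*k+b₁)*(a₂*k+b₂))*(k+q)
        = α*a₂*(a₁*k+b₁)*((k+p)*(k+q)) + (α-2)*((a₁*k+b₁)*(a₂*k+b₂))*(k+p) := by
    intro k hk
    have hkp : 0 < k + p := by have := hposf k hk x₀ hx₀U; rw [← hp] at this; linarith
    have hkq : 0 < k + q := by have := hposf k hk x₁ hx₁U; rw [← hq] at this; linarith
    have hl1 : a₁*k+b₁ ≠ 0 := hnv k hk x₀ hx₀U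
    have hl2 : a₂*k+b₂ ≠ 0 := hnv k hk x₁ hx₁U
    -- derivatives of the two expressions
    have D₁ : HasDerivAt (fun y => (a₁*y+b₁)^α * (y+p)^(α-2))
        ((a₁ * 1 * α * (a₁*k+b₁)^(α-1)) * ((k+p)^(α-2))
          + (a₁*k+b₁)^α * (1 * (α-2) * (k+p)^(α-2-1))) k := by
      have G1 : HasDerivAt (fun y : ℝ => a₁*y+b₁) (a₁ * 1) k :=
        ((hasDerivAt_id k).const_mul a₁).add_const b₁
      have G2 : HasDerivAt (fun y : ℝ => y + p) 1 k := (hasDerivAt_id k).add_const p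
      exact (G1.rpow_const (Or.inl hl1)).mul (G2.rpow_const (Or.inl hkp.ne'))
    have D₂ : HasDerivAt (fun y => (a₂*y+b₂)^α * (y+q)^(α-2))
        ((a₂ * 1 * α * (a₂*k+b₂)^(α-1)) * ((k+q)^(α-2))
          + (a₂*k+b₂)^α * (1 * (α-2) * (k+q)^(α-2-1))) k := by
      have G1 : HasDerivAt (fun y : ℝ => a₂*y+b₂) (a₂ * 1) k :=
        ((hasDerivAt_id k).const_mul a₂).add_const b₂
      have G2 : HasDerivAt (fun y : ℝ => y + q) 1 k := (hasDerivAt_id k).add_const q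
      exact (G1.rpow_const (Or.inl hl2)).mul (G2.rpow_const (Or.inl hkq.ne'))
    have hmem : Ioo a b ∈ nhds k := Ioo_mem_nhds hk.1 hk.2
    have hev₁ : (fun y => c y ^ α) =ᶠ[nhds k] fun y => (a₁*y+b₁)^α * (y+p)^(α-2) :=
      Filter.eventually_of_mem hmem (fun y hy => H y hy x₀ hx₀U)
    have hev₂ : (fun y => c y ^ α) =ᶠ[nhds k] fun y => (a₂*y+b₂)^α * (y+q)^(α-2) :=
      Filter.eventually_of_mem hmem (fun y hy => H y hy x₁ hx₁U)
    have hd : (a₁ * 1 * α * (a₁*k+b₁)^(α-1)) * ((k+p)^(α-2))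
          + (a₁*k+b₁)^α * (1 * (α-2) * (k+p)^(α-2-1))
        = (a₂ * 1 * α * (a₂*k+b₂)^(α-1)) * ((k+q)^(α-2))
          + (a₂*k+b₂)^α * (1 * (α-2) * (k+q)^(α-2-1)) :=
      (D₁.congr_of_eventuallyEq hev₁).unique (D₂.congr_of_eventuallyEq hev₂)
    have h1 := H k hk x₀ hx₀U
    have h2 := H k hk x₁ hx₁U
    rw [← ha₁d, ← hb₁d, ← hp] at h1
    rw [← ha₂d, ← hb₂d, ← hq] at h2
    -- rewrite higher powers as products
    have ea : (a₁*k+b₁)^α = (a₁*k+b₁)^(α-1) * (a₁*k+b₁) := by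
      have := Real.rpow_add_one hl1 (α-1); rw [sub_add_cancel] at this; exact this
    have eb : (a₂*k+b₂)^α = (a₂*k+b₂)^(α-1) * (a₂*k+b₂) := by
      have := Real.rpow_add_one hl2 (α-1); rw [sub_add_cancel] at this; exact this
    have ec : (k+p)^(α-2) = (k+p)^(α-2-1) * (k+p) := by
      have := Real.rpow_add_one hkp.ne' (α-2-1); rw [sub_add_cancel] at this; exact this
    have ed : (k+q)^(α-2) = (k+q)^(α-2-1) * (k+q) := by
      have := Real.rpow_add_one hkq.ne' (α-2-1); rw [sub_add_cancel] at this; exact this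
    rw [ea, ec] at h1
    rw [eb, ed] at h2
    rw [ea, eb, ec, ed] at hd
    have hEpos : (0:ℝ) < c k ^ α := Real.rpow_pos_of_pos (hc k hk) α
    have key2 : (c k ^ α) * (α*a₁*(a₂*k+b₂)*((k+p)*(k+q)) + (α-2)*((a₁*k+b₁)*(a₂*k+b₂))*(k+q))
        = (c k ^ α) * (α*a₂*(a₁*k+b₁)*((k+p)*(k+q)) + (α-2)*((a₁*k+b₁)*(a₂*k+b₂))*(k+p)) := by
      linear_combination
        (((a₂*k+b₂)*(k+q))*(α*a₁*(k+p)+(α-2)*(a₁*k+b₁))) * h1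
        - (((a₁*k+b₁)*(k+p))*(α*a₂*(k+q)+(α-2)*(a₂*k+b₂))) * h2
        + (((a₁*k+b₁)*(k+p))*((a₂*k+b₂)*(k+q))) * hd
    exact mul_left_cancel₀ hEpos.ne' key2
  -- extract coefficients of the quadratic polynomial
  have hcoef := quad_coeffs_zero hab (c₂ := α*(a₁*b₂ - a₂*b₁) + (α-2)*(q-p)*(a₁*a₂))
      (c₁ := α*(a₁*b₂ - a₂*b₁)*(p+q) + (α-2)*(q-p)*(a₁*b₂+a₂*b₁))
      (c₀ := α*(a₁*b₂ - a₂*b₁)*(p*q) + (α-2)*(q-p)*(b₁*b₂))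
      (fun k hk => by linear_combination star k hk)
  obtain ⟨h1, h2, h3⟩ := hcoef
  -- final algebra
  have hqp : q - p ≠ 0 := sub_ne_zero.mpr hne
  have ht : (α-2)*(q-p) ≠ 0 := mul_ne_zero (sub_ne_zero.mpr hα2) hqp
  set k₀ := (a+b)/2 with hk₀d
  have hk₀ : k₀ ∈ Ioo a b := ⟨by simp only [hk₀d]; linarith, by simp only [hk₀d]; linarith⟩
  have hl1 : a₁*k₀+b₁ ≠ 0 := hnv k₀ hk₀ x₀ hx₀U
  have hl2 : a₂*k₀+b₂ ≠ 0 := hnv k₀ hk₀ x₁ hx₁U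
  by_cases ha₁ : a₁ = 0
  · have hb₁ : b₁ ≠ 0 := by rwa [ha₁, zero_mul, zero_add] at hl1
    have hD : α * a₂ * b₁ = 0 := by linear_combination -h1 + (α*b₂ + (α-2)*(q-p)*a₂)*ha₁
    have ha₂ : a₂ = 0 := by
      rcases mul_eq_zero.1 hD with h | h
      · rcases mul_eq_zero.1 h with h | h
        · exact absurd h hα0
        · exact h
      · exact absurd h hb₁
    have hb₂0 : (α-2)*(q-p) * (b₁*b₂) = 0 := by
      linear_combination h3 - α*p*q*b₂*ha₁ + α*p*q*b₁*ha₂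
    have hb₂ : b₂ = 0 := by
      rcases mul_eq_zero.1 hb₂0 with h | h
      · exact absurd h ht
      · rcases mul_eq_zero.1 h with h | h
        · exact absurd h hb₁
        · exact h
    exact hl2 (by rw [ha₂, hb₂, zero_mul, zero_add])
  by_cases ha₂ : a₂ = 0
  · have hb₂ : b₂ ≠ 0 := by rwa [ha₂, zero_mul, zero_add] at hl2
    have hD : α * a₁ * b₂ = 0 := by linear_combination h1 + (α*b₁ - (α-2)*(q-p)*a₁)*ha₂
    rcases mul_eq_zero.1 hD with h | h
    · rcases mul_eq_zero.1 h with h | h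
      · exact absurd h hα0
      · exact absurd h ha₁
    · exact absurd h hb₂
  -- main case : a₁ ≠ 0, a₂ ≠ 0
  have hs : (α-2)*(q-p) * (a₁*b₂ + a₂*b₁ - a₁*a₂*(p+q)) = 0 := by
    linear_combination h2 - (p+q)*h1
  have hs' : a₁*b₂ + a₂*b₁ - a₁*a₂*(p+q) = 0 := by
    rcases mul_eq_zero.1 hs with h | h
    · exact absurd h ht
    · exact h
  have hpr : (α-2)*(q-p) * (b₁*b₂ - a₁*a₂*(p*q)) = 0 := by
    linear_combination h3 - (p*q)*h1
  have hpr' : b₁*b₂ - a₁*a₂*(p*q) = 0 := by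
    rcases mul_eq_zero.1 hpr with h | h
    · exact absurd h ht
    · exact h
  have hfac : a₂^2 * ((b₁ - a₁*p)*(b₁ - a₁*q)) = 0 := by
    linear_combination (a₂*b₁)*hs' - a₁*a₂*hpr'
  have hfac' : (b₁ - a₁*p)*(b₁ - a₁*q) = 0 := by
    rcases mul_eq_zero.1 hfac with h | h
    · exact absurd h (pow_ne_zero 2 ha₂)
    · exact h
  rcases mul_eq_zero.1 hfac' with hb₁p | hb₁q
  · -- b₁ = a₁ p, then b₂ = a₂ q and α = 1
    have hb₂q : a₁ * (b₂ - a₂*q) = 0 := by linear_combination hs' - a₂*hb₁p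
    have hb₂q' : b₂ - a₂*q = 0 := by
      rcases mul_eq_zero.1 hb₂q with h | h
      · exact absurd h ha₁
      · exact h
    have hfin : a₁*a₂*((q-p)*(2*α-2)) = 0 := by
      linear_combination h1 - α*a₁*hb₂q' + α*a₂*hb₁p
    rcases mul_eq_zero.1 hfin with h | h
    · rcases mul_eq_zero.1 h with h | h
      · exact absurd h ha₁
      · exact absurd h ha₂
    · rcases mul_eq_zero.1 h with h | h
      · exact absurd h hqp
      · exact hα1 (by linarith)
  · -- b₁ = a₁ q, then b₂ = a₂ p and 2(p-q) = 0
    have hb₂p : a₁ * (b₂ - a₂*p) = 0 := by linear_combination hs' - a₂*hb₁q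
    have hb₂p' : b₂ - a₂*p = 0 := by
      rcases mul_eq_zero.1 hb₂p with h | h
      · exact absurd h ha₁
      · exact h
    have hfin : a₁*a₂*((q-p)*2) = 0 := by
      linear_combination -h1 + α*a₁*hb₂p' - α*a₂*hb₁q
    rcases mul_eq_zero.1 hfin with h | h
    · rcases mul_eq_zero.1 h with h | h
      · exact absurd h ha₁
      · exact absurd h ha₂
    · rcases mul_eq_zero.1 h with h | h
      · exact absurd h hqp
      · norm_num at h
end

section
/- Let g(x,z) = z - (a₁²x₁² + ⋯ + aₙ²xₙ²) with aᵢ > 0. For every k ∈ ℝ and every p on the elliptic paraboloid M_k = g⁻¹(k), K(p)|∇g(p)|^{n+2} = 2ⁿ a₁² a₂² ⋯ aₙ², a constant independent of both p and k. -/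
/-!
The Hessian of `f x = Σ aᵢ² xᵢ² + k` is the constant diagonal matrix `diag (2 aᵢ²)`, so
`det (Hess f) = 2ⁿ ∏ aᵢ²` at every point. Since `|∇g|² = 1 + |∇f|²`, the factor `|∇g|^(n+2)`
cancels the denominator `(1 + |∇f|²)^((n+2)/2)` of the curvature exactly.
-/

open Finset Real

/-- Partial derivative in the `i`-th coordinate direction. -/
noncomputable def pderiv' {n : ℕ} (i : Fin n) (g : EuclideanSpace ℝ (Fin n) → ℝ)
    (x : EuclideanSpace ℝ (Fin n)) : ℝ :=
  fderiv ℝ g x (EuclideanSpace.single i 1)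

/-- The Hessian matrix of second partial derivatives. -/
noncomputable def hessianMatrix {n : ℕ} (f : EuclideanSpace ℝ (Fin n) → ℝ)
    (x : EuclideanSpace ℝ (Fin n)) : Matrix (Fin n) (Fin n) ℝ :=
  fun i j => pderiv' i (pderiv' j f) x

section WeightedSumSq

variable {n : ℕ} (c : Fin n → ℝ) (k : ℝ)

theorem pderiv'_const_mul_coord (a : ℝ) (i j : Fin n) (x : EuclideanSpace ℝ (Fin n)) :
    pderiv' i (fun y => a * y j) x = if i = j then a else 0 := by
  rw [pderiv', ((PiLp.hasFDerivAt_apply 2 x j).const_mul a).fderiv]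
  simp [eq_comm]

theorem hasFDerivAt_weightedSumSq (x : EuclideanSpace ℝ (Fin n)) :
    HasFDerivAt (fun x : EuclideanSpace ℝ (Fin n) => (∑ i, c i * x i ^ 2) + k)
      (∑ i, (2 * c i * x i) • PiLp.proj (𝕜 := ℝ) 2 (fun _ : Fin n => ℝ) i) x := by
  refine (HasFDerivAt.fun_sum fun i _ => ?_).add_const k
  refine (((PiLp.hasFDerivAt_apply 2 x i).pow 2).const_mul (c i)).congr_fderiv ?_
  rw [smul_smul]
  congr 1
  push_cast
  ring

theorem pderiv'_weightedSumSq (j : Fin n) :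
    pderiv' j (fun x => (∑ i, c i * x i ^ 2) + k) = fun x => 2 * c j * x j := by
  funext x
  rw [pderiv', (hasFDerivAt_weightedSumSq c k x).fderiv]
  simp

theorem hessianMatrix_weightedSumSq (x : EuclideanSpace ℝ (Fin n)) :
    hessianMatrix (fun x => (∑ i, c i * x i ^ 2) + k) x = Matrix.diagonal (fun i => 2 * c i) := by
  ext i j
  rw [hessianMatrix, pderiv'_weightedSumSq, pderiv'_const_mul_coord, Matrix.diagonal_apply]
  split_ifs with h <;> simp [h]

theorem det_hessianMatrix_weightedSumSq (x : EuclideanSpace ℝ (Fin n)) :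
    (hessianMatrix (fun x => (∑ i, c i * x i ^ 2) + k) x).det = 2 ^ n * ∏ i, c i := by
  rw [hessianMatrix_weightedSumSq, Matrix.det_diagonal, prod_mul_distrib, prod_const, card_fin]

end WeightedSumSq

theorem div_rpow_mul_sqrt_pow {t : ℝ} (ht : 0 < t) (d : ℝ) (m : ℕ) :
    d / t ^ (((m : ℝ) + 2) / 2) * √t ^ (m + 2) = d := by
  rw [rpow_div_two_eq_sqrt _ ht.le, ← Nat.cast_ofNat, ← Nat.cast_add, rpow_natCast,
    div_mul_cancel₀ _ (pow_pos (sqrt_pos.mpr ht) _).ne']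

theorem stmt12_general (n : ℕ) (a : Fin n → ℝ) (k : ℝ)
    (f : EuclideanSpace ℝ (Fin n) → ℝ)
    (hf : ∀ x, f x = (∑ i, (a i) ^ 2 * (x i) ^ 2) + k) :
    ∀ x,
      ((hessianMatrix f x).det / (1 + ‖gradient f x‖ ^ 2) ^ (((n : ℝ) + 2) / 2)) *
        (Real.sqrt (1 + ‖gradient f x‖ ^ 2)) ^ (n + 2) =
      2 ^ n * ∏ i, (a i) ^ 2 := by
  intro x
  obtain rfl : f = fun x => (∑ i, (a i) ^ 2 * (x i) ^ 2) + k := funext hf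
  rw [det_hessianMatrix_weightedSumSq, div_rpow_mul_sqrt_pow (by positivity)]

/-- For the elliptic paraboloid `M_k : z = Σaᵢ²xᵢ² + k`, the Gauss–Kronecker curvature
satisfies `K(p)|∇g(p)|^{n+2} = 2ⁿ a₁²⋯aₙ²`, independently of `p` and `k`. -/
theorem stmt12 (n : ℕ) (a : Fin n → ℝ) (ha : ∀ i, 0 < a i) (k : ℝ)
    (f : EuclideanSpace ℝ (Fin n) → ℝ)
    (hf : ∀ x, f x = (∑ i, (a i) ^ 2 * (x i) ^ 2) + k) :
    ∀ x,
      ((hessianMatrix f x).det / (1 + ‖gradient f x‖ ^ 2) ^ (((n : ℝ) + 2) / 2)) *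
        (Real.sqrt (1 + ‖gradient f x‖ ^ 2)) ^ (n + 2) =
      2 ^ n * ∏ i, (a i) ^ 2 :=
  stmt12_general n a k f hf
end

section
/- Let f(x) = a₁²x₁² + ⋯ + aₙ²xₙ² with aᵢ > 0, and let M_k be the graph z = f(x) + k. For any p ∈ M_k and h > 0, the volume of the region between M_k and the tangent hyperplane of M_{k+h} parallel to the tangent at p equals γ_n h^{(n+2)/2}, where γ_n = 2σ_{n-1}/(n(n+2)a₁⋯aₙ) and σ_{n-1} is the surface area of the unit (n-1)-sphere. In particular this is independent of p and k. -/
open Finset MeasureTheory Real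

/-!
By Fubini, the volume is the integral over `x` of the height `h - ∑ aᵢ² (xᵢ - pᵢ)²` of the
region above `x` (the hyperplane exceeds `f + k` by this completed square), clamped at `0`.
Translating by `p` and substituting `xᵢ = √h yᵢ / aᵢ` turns it into `h^{n/2+1} / ∏ aᵢ` times
`∫ (1 - ‖y‖²)⁺`, which polar coordinates evaluate to `2ω / (n + 2) = 2σ / (n (n + 2))`.
-/

theorem prod_volume_setOf_le_and_le_eq_lintegral {α : Type*} [MeasurableSpace α]
    {μ : Measure α} [SFinite μ] {f g : α → ℝ} (hf : Measurable f) (hg : Measurable g) :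
    μ.prod volume {q : α × ℝ | f q.1 ≤ q.2 ∧ q.2 ≤ g q.1} =
      ∫⁻ x, ENNReal.ofReal (g x - f x) ∂μ := by
  have hs : MeasurableSet {q : α × ℝ | f q.1 ≤ q.2 ∧ q.2 ≤ g q.1} :=
    (measurableSet_le (hf.comp measurable_fst) measurable_snd).inter
      (measurableSet_le measurable_snd (hg.comp measurable_fst))
  rw [Measure.prod_apply hs]
  exact lintegral_congr fun x => Real.volume_Icc (a := f x) (b := g x)

theorem Matrix.det_toLpLin {n R : Type*} [Fintype n] [DecidableEq n] [CommRing R]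
    (p : ENNReal) (A : Matrix n n R) : LinearMap.det (Matrix.toLpLin p p A) = A.det := by
  rw [Matrix.toLpLin_eq_toLin, LinearMap.det_toLin]

theorem integral_Ioi_pow_mul_max_one_sub_sq {d : ℕ} (hd : 1 ≤ d) :
    ∫ y in Set.Ioi (0 : ℝ), y ^ (d - 1) * max (1 - y ^ 2) 0 = 2 / (d * (d + 2)) := by
  have hsupp : Set.EqOn (fun y : ℝ => y ^ (d - 1) * max (1 - y ^ 2) 0)
      ((Set.Ioc 0 1).indicator fun y => y ^ (d - 1) - y ^ (d + 1)) (Set.Ioi 0) := by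
    intro y (hy : 0 < y)
    dsimp only
    rcases le_or_gt y 1 with hy1 | hy1
    · rw [Set.indicator_of_mem (show y ∈ Set.Ioc (0 : ℝ) 1 from ⟨hy, hy1⟩),
        max_eq_left (by nlinarith), mul_sub, mul_one, ← pow_add, show d - 1 + 2 = d + 1 by omega]
    · rw [Set.indicator_of_notMem fun hmem => hy1.not_ge hmem.2, max_eq_right (by nlinarith),
        mul_zero]
  rw [setIntegral_congr_fun measurableSet_Ioi hsupp, integral_indicator measurableSet_Ioc,
    Measure.restrict_restrict measurableSet_Ioc, Set.inter_eq_left.mpr Set.Ioc_subset_Ioi_self,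
    ← intervalIntegral.integral_of_le zero_le_one, intervalIntegral.integral_sub
      (intervalIntegral.intervalIntegrable_pow _) (intervalIntegral.intervalIntegrable_pow _),
    integral_pow, integral_pow, Nat.sub_add_cancel hd, Nat.cast_sub hd]
  have hd0 : (0 : ℝ) < d := by exact_mod_cast hd
  simp only [one_pow, zero_pow (by omega : d ≠ 0), zero_pow (by omega : d + 1 + 1 ≠ 0),
    sub_zero, Nat.cast_add, Nat.cast_one, sub_add_cancel]
  field_simp
  ring

section AddHaar

variable {E : Type*} [NormedAddCommGroup E] [NormedSpace ℝ E] [MeasurableSpace E] [BorelSpace E]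
  [FiniteDimensional ℝ E] (μ : Measure E) [μ.IsAddHaarMeasure]

theorem lintegral_eq_abs_det_mul_lintegral_comp_linearMap {L : E →ₗ[ℝ] E}
    (hL : LinearMap.det L ≠ 0) {F : E → ENNReal} (hF : Measurable F) :
    ∫⁻ x, F x ∂μ = ENNReal.ofReal |LinearMap.det L| * ∫⁻ x, F (L x) ∂μ := by
  rw [← lintegral_map hF L.continuous_of_finiteDimensional.measurable,
    Measure.map_linearMap_addHaar_eq_smul_addHaar μ hL, lintegral_smul_measure, smul_eq_mul,
    ← mul_assoc, ← ENNReal.ofReal_mul (abs_nonneg _), abs_inv,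
    mul_inv_cancel₀ (abs_ne_zero.2 hL), ENNReal.ofReal_one, one_mul]

theorem lintegral_ofReal_one_sub_norm_sq [Nontrivial E] :
    ∫⁻ x, ENNReal.ofReal (1 - ‖x‖ ^ 2) ∂μ =
      ENNReal.ofReal (2 * μ.real (Metric.ball 0 1) / (Module.finrank ℝ E + 2)) := by
  set φ : ℝ → ℝ := fun t => max (1 - t ^ 2) 0
  have hφ : Continuous φ := by fun_prop
  have hsupp : HasCompactSupport fun x : E => φ ‖x‖ := by
    refine HasCompactSupport.intro (isCompact_closedBall 0 1) fun x hx => ?_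
    have hx : 1 < ‖x‖ := by simpa using hx
    exact max_eq_right (by nlinarith)
  have hd : 0 < Module.finrank ℝ E := Module.finrank_pos
  calc ∫⁻ x, ENNReal.ofReal (1 - ‖x‖ ^ 2) ∂μ
        = ∫⁻ x, ENNReal.ofReal (φ ‖x‖) ∂μ := by
        simp only [φ, ENNReal.ofReal_max, ENNReal.ofReal_zero, zero_le, max_eq_left]
    _ = ENNReal.ofReal (∫ x, φ ‖x‖ ∂μ) :=
        (ofReal_integral_eq_lintegral_ofReal
          ((hφ.comp continuous_norm).integrable_of_hasCompactSupport hsupp)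
          (Filter.Eventually.of_forall fun x => le_max_right _ _)).symm
    _ = _ := by
        rw [integral_fun_norm_addHaar μ φ]
        simp only [smul_eq_mul, nsmul_eq_mul, φ]
        rw [integral_Ioi_pow_mul_max_one_sub_sq hd]
        have : (0 : ℝ) < Module.finrank ℝ E := by exact_mod_cast hd
        field_simp

end AddHaar

theorem EuclideanSpace.lintegral_ofReal_sub_sum_mul_sq {ι : Type*} [Fintype ι] [Nonempty ι]
    {a : ι → ℝ} (ha : ∀ i, 0 < a i) {h : ℝ} (hh : 0 < h) :
    ∫⁻ x : EuclideanSpace ℝ ι, ENNReal.ofReal (h - ∑ i, a i ^ 2 * x i ^ 2) =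
      ENNReal.ofReal (2 * volume.real (Metric.ball (0 : EuclideanSpace ℝ ι) 1) /
        ((Fintype.card ι + 2) * ∏ i, a i) * h ^ ((Fintype.card ι + 2 : ℝ) / 2)) := by
  classical
  set c : ι → ℝ := fun i => √h / a i
  have hc : 0 < ∏ i, c i := prod_pos fun i _ => div_pos (Real.sqrt_pos.2 hh) (ha i)
  set L := Matrix.toLpLin 2 2 (Matrix.diagonal c)
  have hdet : LinearMap.det L = ∏ i, c i := by rw [Matrix.det_toLpLin, Matrix.det_diagonal]
  have hscale (y : EuclideanSpace ℝ ι) :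
      h - ∑ i, a i ^ 2 * L y i ^ 2 = h * (1 - ‖y‖ ^ 2) := by
    rw [EuclideanSpace.real_norm_sq_eq, mul_sub, mul_one, mul_sum]
    congr 1
    refine sum_congr rfl fun i _ => ?_
    have hai := (ha i).ne'
    simp only [L, c, Matrix.toLpLin_apply, Matrix.mulVec_diagonal]
    field_simp
    rw [sq_sqrt hh.le]
    ring
  have hpow : √h ^ Fintype.card ι * h = h ^ ((Fintype.card ι + 2 : ℝ) / 2) := by
    rw [sqrt_eq_rpow, ← rpow_natCast, ← rpow_mul hh.le, ← rpow_add_one hh.ne']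
    ring_nf
  rw [lintegral_eq_abs_det_mul_lintegral_comp_linearMap volume (hdet ▸ hc.ne') (by fun_prop),
    hdet]
  simp_rw [hscale, ENNReal.ofReal_mul hh.le]
  rw [lintegral_const_mul' _ _ ENNReal.ofReal_ne_top, lintegral_ofReal_one_sub_norm_sq,
    finrank_euclideanSpace, ← ENNReal.ofReal_mul hh.le, ← ENNReal.ofReal_mul (abs_nonneg _),
    abs_of_pos hc, prod_div_distrib, prod_const, card_univ, ← hpow]
  congr 1
  rw [← div_div]
  ring

/-- For the elliptic paraboloid `M_k : z = Σaᵢ²xᵢ² + k`, the volume cut off from `M_k` by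
the tangent hyperplane of `M_{k+h}` parallel to the tangent hyperplane at
`p ∈ M_k` equals `γ_n h^{(n+2)/2}`, where `γ_n = 2σ_{n-1}/(n(n+2)a₁⋯aₙ)` and
`σ_{n-1} = n ω_n`; in particular it is independent of `p` and `k`. -/
theorem stmt13 (n : ℕ) (hn : 1 ≤ n) (a : Fin n → ℝ) (ha : ∀ i, 0 < a i) (k h : ℝ)
    (hh : 0 < h)
    (f : EuclideanSpace ℝ (Fin n) → ℝ)
    (hf : ∀ x, f x = ∑ i, (a i) ^ 2 * (x i) ^ 2)
    (ω σ : ℝ) (hω : ω = (volume (Metric.ball (0 : EuclideanSpace ℝ (Fin n)) 1)).toReal)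
    (hσ : σ = n * ω)
    (p : EuclideanSpace ℝ (Fin n)) :
    (volume {q : (EuclideanSpace ℝ (Fin n)) × ℝ |
        f q.1 + k ≤ q.2 ∧
        q.2 ≤ f p + k + h + ∑ i, 2 * (a i) ^ 2 * p i * (q.1 i - p i)}).toReal =
      (2 * σ / (n * (n + 2) * ∏ i, a i)) * h ^ (((n : ℝ) + 2) / 2) := by
  have : Nonempty (Fin n) := ⟨⟨0, hn⟩⟩
  have hfm : Measurable f := by rw [funext hf]; fun_prop
  have hheight (x : EuclideanSpace ℝ (Fin n)) :
      f p + k + h + ∑ i, 2 * a i ^ 2 * p i * (x i - p i) - (f x + k) =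
        h - ∑ i, a i ^ 2 * (x - p) i ^ 2 := by
    have hsq : ∑ i, 2 * a i ^ 2 * p i * (x i - p i) =
        ∑ i, a i ^ 2 * x i ^ 2 - ∑ i, a i ^ 2 * p i ^ 2 - ∑ i, a i ^ 2 * (x i - p i) ^ 2 := by
      rw [← sum_sub_distrib, ← sum_sub_distrib]
      exact sum_congr rfl fun i _ => by ring
    simp only [hf, hsq, PiLp.sub_apply]
    ring
  rw [Measure.volume_eq_prod, prod_volume_setOf_le_and_le_eq_lintegral (f := fun x => f x + k)
      (g := fun x => f p + k + h + ∑ i, 2 * a i ^ 2 * p i * (x i - p i)) (by fun_prop)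
      (by fun_prop)]
  simp only [hheight]
  have hA : 0 < ∏ i, a i := prod_pos fun i _ => ha i
  rw [lintegral_sub_right_eq_self (fun x => ENNReal.ofReal (h - ∑ i, a i ^ 2 * x i ^ 2)) p,
    EuclideanSpace.lintegral_ofReal_sub_sum_mul_sq ha hh, Fintype.card_fin,
    ENNReal.toReal_ofReal (by positivity), measureReal_def, ← hω, hσ]
  have : (0 : ℝ) < n := by exact_mod_cast hn
  field_simp
end

section
/- For k, h > 0 and q ∈ ℝⁿ, the set D_q(k,h) = { y ∈ ℝⁿ : (|q|²+k)(|y|²+k) ≤ (⟨q,y⟩ + √(k(k+h)))² } is an ellipsoid centered at √((k+h)/k)·q, congruent after translation and rotation to { y : k y₁²/(h(|q|²+k)) + (y₂²+⋯+yₙ²)/h ≤ 1 }, and its n-dimensional volume is (1/√k)·h^{n/2}·√(|q|²+k)·ω_n. -/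
open Finset MeasureTheory Real
open scoped RealInnerProductSpace

/-!
Writing `y = c + w` with `c = √((k+h)/k) • q`, the inequality defining `D` becomes
`(|q|² + k)|w|² - ⟪q, w⟫² ≤ (|q|² + k) h`: completing the square makes the terms linear in `w`
cancel, and `(k+h)/k` is exactly the coefficient for which the constant terms leave `(|q|² + k) h`.
A reflection taking `|q| e₁` to `q` turns this into
`k w₁² + (|q|² + k)(w₂² + ⋯ + wₙ²) ≤ (|q|² + k) h`, the axis-parallel ellipsoid of the statement.
That ellipsoid is the preimage of the unit ball under the diagonal map with entries
`1/√(h(|q|²+k)/k), 1/√h, …, 1/√h`, which gives its volume.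
-/

section InnerProductSpace

variable {E : Type*} [NormedAddCommGroup E] [InnerProductSpace ℝ E]

theorem exists_linearIsometryEquiv_inner_apply (q v : E) (hv : ‖v‖ = 1) :
    ∃ R : E ≃ₗᵢ[ℝ] E, ∀ z, ⟪q, R z⟫ = ‖q‖ * ⟪v, z⟫ := by
  have hnorm : ‖‖q‖ • v‖ = ‖q‖ := by rw [norm_smul, norm_norm, hv, mul_one]
  obtain ⟨R, hR⟩ : ∃ R : E ≃ₗᵢ[ℝ] E, R (‖q‖ • v) = q := ⟨_, Submodule.reflection_sub hnorm⟩
  refine ⟨R, fun z => ?_⟩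
  calc ⟪q, R z⟫ = ⟪R (‖q‖ • v), R z⟫ := by rw [hR]
    _ = ‖q‖ * ⟪v, z⟫ := by rw [LinearIsometryEquiv.inner_map_map, real_inner_smul_left]

/-- The set `D_q(k,h)`. -/
def quadricSet (q : E) (k h : ℝ) : Set E :=
  {y | (‖q‖ ^ 2 + k) * (‖y‖ ^ 2 + k) ≤ (⟪q, y⟫ + √(k * (k + h))) ^ 2}

theorem norm_sq_smul_add_sub_sq_inner (q w : E) (k α : ℝ) :
    (‖q‖ ^ 2 + k) * (‖α • q + w‖ ^ 2 + k) - (⟪q, α • q + w⟫ + α * k) ^ 2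
      = (‖q‖ ^ 2 + k) * ‖w‖ ^ 2 - ⟪q, w⟫ ^ 2 - (‖q‖ ^ 2 + k) * (α ^ 2 - 1) * k := by
  rw [norm_add_sq_real, norm_smul, inner_add_right, real_inner_smul_left, real_inner_smul_right,
    real_inner_self_eq_norm_sq, Real.norm_eq_abs, mul_pow, sq_abs]
  ring

theorem sqrt_smul_add_mem_quadricSet_iff (q w : E) {k h : ℝ} (hk : 0 < k) (hkh : 0 ≤ k + h) :
    √((k + h) / k) • q + w ∈ quadricSet q k h ↔
      (‖q‖ ^ 2 + k) * ‖w‖ ^ 2 - ⟪q, w⟫ ^ 2 ≤ (‖q‖ ^ 2 + k) * h := by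
  have hα : √((k + h) / k) ^ 2 = (k + h) / k := sq_sqrt (div_nonneg hkh hk.le)
  have hαk : √((k + h) / k) * k = √(k * (k + h)) := by
    rw [show k * (k + h) = (k + h) / k * k ^ 2 by field_simp,
      sqrt_mul (div_nonneg hkh hk.le), sqrt_sq hk.le]
  have hcoef : (‖q‖ ^ 2 + k) * ((k + h) / k - 1) * k = (‖q‖ ^ 2 + k) * h := by
    field_simp
    ring
  rw [quadricSet, Set.mem_ofPred_eq, ← hαk, ← sub_nonpos, norm_sq_smul_add_sub_sq_inner, hα,
    hcoef, sub_nonpos]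

end InnerProductSpace

theorem Isometry.volume_image {V : Type*} [NormedAddCommGroup V] [InnerProductSpace ℝ V]
    [FiniteDimensional ℝ V] [MeasurableSpace V] [BorelSpace V] {f : V → V} (hf : Isometry f)
    (s : Set V) : volume (f '' s) = volume s := by
  rw [← InnerProductSpace.euclideanHausdorffMeasure_eq_volume, hf.euclideanHausdorffMeasure_image]

section EuclideanSpace

variable {ι : Type*} [Fintype ι]

theorem EuclideanSpace.volume_setOf_sum_sq_div_le_one {a : ι → ℝ} (ha : ∀ i, 0 < a i) :
    volume {y : EuclideanSpace ℝ ι | ∑ i, y i ^ 2 / a i ≤ 1}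
      = ENNReal.ofReal (∏ i, √(a i)) * volume (Metric.closedBall (0 : EuclideanSpace ℝ ι) 1) := by
  classical
  set T := Matrix.toLpLin 2 2 (Matrix.diagonal fun i => (√(a i))⁻¹)
  have hdet : LinearMap.det T = (∏ i, √(a i))⁻¹ := by
    simp only [T, Matrix.toLpLin_eq_toLin]
    rw [LinearMap.det_toLin, Matrix.det_diagonal, prod_inv_distrib]
  have hset : {y : EuclideanSpace ℝ ι | ∑ i, y i ^ 2 / a i ≤ 1} = T ⁻¹' Metric.closedBall 0 1 := by
    ext y
    rw [Set.mem_preimage, mem_closedBall_zero_iff, ← sq_le_one_iff₀ (norm_nonneg _),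
      EuclideanSpace.real_norm_sq_eq]
    simp [T, Matrix.toLpLin_apply, Matrix.mulVec_diagonal, inv_mul_eq_div, div_pow,
      sq_sqrt (ha _).le]
  have hprod : 0 < ∏ i, √(a i) := prod_pos fun i _ => sqrt_pos.2 (ha i)
  rw [hset, Measure.addHaar_preimage_linearMap _ (by rw [hdet]; exact (inv_pos.2 hprod).ne'), hdet,
    inv_inv, abs_of_pos hprod]

variable [DecidableEq ι]

theorem Fintype.prod_ite_eq_mul_pow {M : Type*} [CommMonoid M] (i₀ : ι) (x y : M) :
    ∏ i, (if i = i₀ then x else y) = x * y ^ (Fintype.card ι - 1) := by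
  rw [← mul_prod_erase univ _ (mem_univ i₀), if_pos rfl,
    Finset.prod_congr rfl fun i hi => if_neg (ne_of_mem_erase hi), Finset.prod_const,
    card_erase_of_mem (mem_univ i₀), Finset.card_univ]

theorem Fintype.sum_div_ite_eq (f : ι → ℝ) (i₀ : ι) (x y : ℝ) :
    ∑ i, f i / (if i = i₀ then x else y) = f i₀ / x + (∑ i ∈ univ.erase i₀, f i) / y := by
  rw [← add_sum_erase univ _ (mem_univ i₀), if_pos rfl, sum_div,
    Finset.sum_congr rfl fun i hi => by rw [if_neg (ne_of_mem_erase hi)]]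

theorem EuclideanSpace.norm_sq_eq_sq_add_sum_erase (z : EuclideanSpace ℝ ι) (i₀ : ι) :
    ‖z‖ ^ 2 = z i₀ ^ 2 + ∑ i ∈ univ.erase i₀, z i ^ 2 := by
  rw [EuclideanSpace.real_norm_sq_eq, add_sum_erase univ (fun i => z i ^ 2) (mem_univ i₀)]

theorem EuclideanSpace.volume_setOf_sq_div_add_sum_erase_div_le_one (i₀ : ι) {x y : ℝ}
    (hx : 0 < x) (hy : 0 < y) :
    volume {z : EuclideanSpace ℝ ι | z i₀ ^ 2 / x + (∑ i ∈ univ.erase i₀, z i ^ 2) / y ≤ 1}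
      = ENNReal.ofReal (√x * √y ^ (Fintype.card ι - 1)) *
          volume (Metric.closedBall (0 : EuclideanSpace ℝ ι) 1) := by
  have ha : ∀ i, 0 < if i = i₀ then x else y := fun i => by split_ifs <;> assumption
  have hset : {z : EuclideanSpace ℝ ι | z i₀ ^ 2 / x + (∑ i ∈ univ.erase i₀, z i ^ 2) / y ≤ 1}
      = {z | ∑ i, z i ^ 2 / (if i = i₀ then x else y) ≤ 1} := by
    simp_rw [Fintype.sum_div_ite_eq]
  rw [hset, volume_setOf_sum_sq_div_le_one ha,
    Finset.prod_congr rfl fun i _ => apply_ite sqrt (i = i₀) x y, Fintype.prod_ite_eq_mul_pow]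

theorem exists_isometryEquiv_image_eq_quadricSet (i₀ : ι) (q : EuclideanSpace ℝ ι) {k h : ℝ}
    (hk : 0 < k) (hh : 0 < h) :
    ∃ e : EuclideanSpace ℝ ι ≃ᵢ EuclideanSpace ℝ ι,
      e '' {z | z i₀ ^ 2 / (h * (‖q‖ ^ 2 + k) / k) + (∑ i ∈ univ.erase i₀, z i ^ 2) / h ≤ 1}
        = quadricSet q k h ∧ e 0 = √((k + h) / k) • q := by
  obtain ⟨R, hR⟩ := exists_linearIsometryEquiv_inner_apply q (EuclideanSpace.single i₀ 1) (by simp)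
  let e := R.toIsometryEquiv.trans (IsometryEquiv.constVAdd (√((k + h) / k) • q))
  refine ⟨e, (congrArg _ (Set.ext fun z => ?_)).trans (Set.image_preimage_eq _ e.surjective),
    by simp [e]⟩
  change _ ↔ √((k + h) / k) • q + R z ∈ quadricSet q k h
  rw [sqrt_smul_add_mem_quadricSet_iff _ _ hk (by linarith), R.norm_map, hR,
    EuclideanSpace.inner_single_left, Set.mem_ofPred_eq, EuclideanSpace.norm_sq_eq_sq_add_sum_erase z i₀]
  simp only [conj_trivial, one_mul]
  rw [show z i₀ ^ 2 / (h * (‖q‖ ^ 2 + k) / k) + (∑ i ∈ univ.erase i₀, z i ^ 2) / h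
      = (k * z i₀ ^ 2 + (‖q‖ ^ 2 + k) * ∑ i ∈ univ.erase i₀, z i ^ 2) / ((‖q‖ ^ 2 + k) * h) by
      field_simp, div_le_one (by positivity)]
  ring_nf

end EuclideanSpace

/-- `D_q(k,h) = {y : (|q|²+k)(|y|²+k) ≤ (⟨q,y⟩+√(k(k+h)))²}` is an ellipsoid centered at
`√((k+h)/k)·q`, congruent (by a rotation and translation, i.e. an isometry) to the canonical
ellipsoid `k y₁²/(h(|q|²+k)) + (y₂²+⋯+yₙ²)/h ≤ 1`, with volume
`(1/√k) h^{n/2} √(|q|²+k) ω_n`. -/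
theorem stmt14 (n : ℕ) (hn : 1 ≤ n) (k h : ℝ) (hk : 0 < k) (hh : 0 < h)
    (q : EuclideanSpace ℝ (Fin n))
    (ω : ℝ) (hω : ω = (volume (Metric.ball (0 : EuclideanSpace ℝ (Fin n)) 1)).toReal)
    (D : Set (EuclideanSpace ℝ (Fin n)))
    (hD : D = {y | (‖q‖ ^ 2 + k) * (‖y‖ ^ 2 + k) ≤ (⟪q, y⟫ + Real.sqrt (k * (k + h))) ^ 2}) :
    (volume D).toReal = (1 / Real.sqrt k) * h ^ ((n : ℝ) / 2) * Real.sqrt (‖q‖ ^ 2 + k) * ω ∧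
    ∃ e : EuclideanSpace ℝ (Fin n) ≃ᵢ EuclideanSpace ℝ (Fin n),
      e '' {y | k * (y ⟨0, hn⟩) ^ 2 / (h * (‖q‖ ^ 2 + k)) +
              (∑ i ∈ Finset.univ.erase ⟨0, hn⟩, (y i) ^ 2) / h ≤ 1} = D ∧
      e 0 = Real.sqrt ((k + h) / k) • q := by
  obtain rfl : D = quadricSet q k h := hD
  subst hω
  have hE : {y : EuclideanSpace ℝ (Fin n) | k * (y ⟨0, hn⟩) ^ 2 / (h * (‖q‖ ^ 2 + k)) +
      (∑ i ∈ univ.erase ⟨0, hn⟩, (y i) ^ 2) / h ≤ 1} = {y | y ⟨0, hn⟩ ^ 2 / (h * (‖q‖ ^ 2 + k) / k)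
        + (∑ i ∈ univ.erase ⟨0, hn⟩, y i ^ 2) / h ≤ 1} := by
    simp only [div_div_eq_mul_div, mul_comm k]
  obtain ⟨e, himage, he0⟩ := exists_isometryEquiv_image_eq_quadricSet ⟨0, hn⟩ q hk hh
  refine ⟨?_, e, hE ▸ himage, he0⟩
  have : Nonempty (Fin n) := ⟨⟨0, hn⟩⟩
  rw [← himage, e.isometry.volume_image,
    EuclideanSpace.volume_setOf_sq_div_add_sum_erase_div_le_one _ (by positivity) hh,
    Measure.addHaar_closedBall_eq_addHaar_ball, ENNReal.toReal_mul,
    ENNReal.toReal_ofReal (by positivity), Fintype.card_fin, rpow_div_two_eq_sqrt _ hh.le,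
    rpow_natCast, sqrt_div' _ hk.le, sqrt_mul hh.le, ← pow_sub_one_mul (by omega : n ≠ 0)]
  ring
end

section
/- There is no function θ : (0,∞) → ℝ such that for all k, h > 0 and all q ∈ ℝⁿ, (1/V(D_q(k,h))) ∫_{D_q(k,h)} H(y) dy = H(q) θ(h), where H(y) = √((a₁²+1)y₁²+⋯+(aₙ²+1)yₙ²+k)/√(|y|²+k), aᵢ > 0, and D_q(k,h) = {y : (|q|²+k)(|y|²+k) ≤ (⟨q,y⟩+√(k(k+h)))²}. Consequently the function g(x,z) = z² - Σaᵢ²xᵢ² does not satisfy the equal-lateral-surface-area condition (S*). -/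
/-!
`weightedRatio a k` is the paper's `H_k` and `ellipsoidDomain q k h` its `D_q(k,h)`.

Take `k = h = 1` and suppose `θ` exists. For `q = 0` the domain is the unit ball, on which
`H > 1` away from the origin, so `θ 1 = ⨍ H > 1`. On the other hand `H ≤ √(a₁² + 1)`
everywhere, `a₁²` being the largest `aᵢ²`, so every average of `H` is at most `√(a₁² + 1)`,
while `H (t e₁) → √(a₁² + 1)` as `t → ∞`; hence `H (t e₁) θ 1 > √(a₁² + 1)` for large `t`,
a contradiction.
-/

open Finset MeasureTheory Real Filter Topology Metric
open scoped RealInnerProductSpace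

section Average

variable {α : Type*} [MeasurableSpace α] {μ : Measure α} {s : Set α} {f : α → ℝ}

theorem one_div_mul_setIntegral_eq_setAverage :
    1 / (μ s).toReal * ∫ x in s, f x ∂μ = ⨍ x in s, f x ∂μ := by
  rw [setAverage_eq, smul_eq_mul, one_div, measureReal_def]

theorem setAverage_le_of_forall_le {M : ℝ} (hμ : μ s ≠ ⊤) (hf : IntegrableOn f s μ)
    (hM : 0 ≤ M) (h : ∀ x ∈ s, f x ≤ M) : ⨍ x in s, f x ∂μ ≤ M := by
  by_cases hμ₀ : μ s = 0
  · rwa [setAverage_eq, measureReal_def, hμ₀, ENNReal.toReal_zero, inv_zero, zero_smul]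
  · obtain ⟨x, hx, hle⟩ := exists_setAverage_le hμ₀ hμ hf
    exact hle.trans (h x hx)

theorem lt_setAverage_of_ae_lt {c : ℝ} (hμ₀ : μ s ≠ 0) (hμ : μ s ≠ ⊤) (hf : IntegrableOn f s μ)
    (h : ∀ᵐ x ∂μ, x ∈ s → c < f x) : c < ⨍ x in s, f x ∂μ := by
  by_contra! hle
  refine (measure_le_setAverage_pos hμ₀ hμ hf).ne' (measure_mono_null ?_ (ae_iff.1 h))
  rintro x ⟨hx, hfx⟩ hlt
  exact (hlt hx).not_ge (hfx.trans hle)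

end Average

section Ellipsoid

variable {E : Type*} [NormedAddCommGroup E] [InnerProductSpace ℝ E] {k h : ℝ}

def ellipsoidDomain (q : E) (k h : ℝ) : Set E :=
  {y | (‖q‖ ^ 2 + k) * (‖y‖ ^ 2 + k) ≤ (⟪q, y⟫ + √(k * (k + h))) ^ 2}

theorem ellipsoidDomain_zero (hk : 0 < k) (hh : 0 ≤ h) :
    ellipsoidDomain (0 : E) k h = closedBall 0 √h := by
  ext y
  have hs : √(k * (k + h)) ^ 2 = k * (k + h) := sq_sqrt (by positivity)
  simp only [ellipsoidDomain, Set.mem_ofPred_eq, norm_zero, inner_zero_left, zero_add,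
    mem_closedBall, dist_zero_right, hs]
  rw [le_sqrt (norm_nonneg y) hh, zero_pow two_ne_zero, zero_add, mul_le_mul_iff_right₀ hk]
  constructor <;> intro <;> linarith

theorem isBounded_ellipsoidDomain (q : E) (hk : 0 < k) (h : ℝ) :
    Bornology.IsBounded (ellipsoidDomain q k h) := by
  set s := √(k * (k + h))
  refine isBounded_iff_forall_norm_le.2 ⟨(2 * s * ‖q‖ + s ^ 2) / k + 1, fun y hy => ?_⟩
  have hs : 0 ≤ s := sqrt_nonneg _
  obtain ⟨hlo, hhi⟩ := abs_le.1 (abs_real_inner_le_norm q y)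
  have hsq : (⟪q, y⟫ + s) ^ 2 ≤ (‖q‖ * ‖y‖ + s) ^ 2 := sq_le_sq' (by linarith) (by linarith)
  have hquad : k * ‖y‖ ^ 2 ≤ 2 * s * ‖q‖ * ‖y‖ + s ^ 2 := by
    nlinarith [hy.trans hsq, sq_nonneg ‖q‖]
  rw [div_add_one hk.ne', le_div_iff₀ hk]
  rcases le_or_gt ‖y‖ 1 with hy1 | hy1 <;> nlinarith [norm_nonneg q]

theorem isCompact_ellipsoidDomain [FiniteDimensional ℝ E] (q : E) (hk : 0 < k) (h : ℝ) :
    IsCompact (ellipsoidDomain q k h) :=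
  isCompact_of_isClosed_isBounded (isClosed_le (by fun_prop) (by fun_prop))
    (isBounded_ellipsoidDomain q hk h)

end Ellipsoid

section WeightedRatio

variable {ι : Type*} [Fintype ι] (a : ι → ℝ) {k : ℝ}

noncomputable def weightedRatio (k : ℝ) (y : EuclideanSpace ℝ ι) : ℝ :=
  √((∑ i, (a i ^ 2 + 1) * y i ^ 2) + k) / √((∑ i, y i ^ 2) + k)

theorem weightedRatio_zero (hk : 0 < k) : weightedRatio a k 0 = 1 := by
  simp [weightedRatio, (sqrt_pos.2 hk).ne']

theorem one_lt_weightedRatio (ha : ∀ i, a i ≠ 0) (hk : 0 < k) {y : EuclideanSpace ℝ ι}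
    (hy : y ≠ 0) : 1 < weightedRatio a k y := by
  obtain ⟨j, hj⟩ : ∃ j, y j ≠ 0 := by
    by_contra! h
    exact hy (by ext j; simp [h j])
  have hpos : 0 < ∑ i, a i ^ 2 * y i ^ 2 :=
    sum_pos' (fun i _ => by positivity) ⟨j, mem_univ j, by have := ha j; positivity⟩
  have : 0 < √((∑ i, y i ^ 2) + k) := sqrt_pos.2 (by positivity)
  rw [weightedRatio, one_lt_div this]
  refine sqrt_lt_sqrt (by positivity) ?_
  simp only [add_mul, one_mul, sum_add_distrib]
  linarith

theorem weightedRatio_le (hk : 0 < k) {j : ι} (hj : ∀ i, a i ^ 2 ≤ a j ^ 2)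
    (y : EuclideanSpace ℝ ι) : weightedRatio a k y ≤ √(a j ^ 2 + 1) := by
  rw [weightedRatio, div_le_iff₀ (sqrt_pos.2 (by positivity)), ← sqrt_mul (by positivity)]
  refine sqrt_le_sqrt ?_
  have : ∑ i, (a i ^ 2 + 1) * y i ^ 2 ≤ (a j ^ 2 + 1) * ∑ i, y i ^ 2 := by
    rw [mul_sum]
    exact sum_le_sum fun i _ => mul_le_mul_of_nonneg_right (by linarith [hj i]) (sq_nonneg _)
  nlinarith [sq_nonneg (a j)]

theorem continuous_weightedRatio (hk : 0 < k) : Continuous (weightedRatio a k) :=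
  .div (by fun_prop) (by fun_prop) fun y => (sqrt_pos.2 (by positivity)).ne'

theorem weightedRatio_single [DecidableEq ι] (i : ι) (t : ℝ) :
    weightedRatio a k (EuclideanSpace.single i t) =
      √((a i ^ 2 + 1) * t ^ 2 + k) / √(t ^ 2 + k) := by
  simp [weightedRatio, PiLp.single_apply]

theorem tendsto_weightedRatio_single [DecidableEq ι] (i : ι) :
    Tendsto (fun t => weightedRatio a k (EuclideanSpace.single i t)) atTop
      (𝓝 √(a i ^ 2 + 1)) := by
  have hden : Tendsto (fun t : ℝ => t ^ 2 + k) atTop atTop :=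
    tendsto_atTop_add_const_right _ _ (tendsto_pow_atTop two_ne_zero)
  have hquot : Tendsto (fun t : ℝ => (a i ^ 2 + 1) - a i ^ 2 * k / (t ^ 2 + k)) atTop
      (𝓝 (a i ^ 2 + 1)) := by
    simpa using tendsto_const_nhds.sub (tendsto_const_nhds.div_atTop hden)
  refine ((continuous_sqrt.tendsto _).comp hquot).congr' ?_
  filter_upwards [hden.eventually_gt_atTop 0] with t ht
  rw [weightedRatio_single, Function.comp_apply, ← sqrt_div' _ ht.le]
  congr 1
  field_simp
  ring

theorem setAverage_weightedRatio_le (hk : 0 < k) {j : ι} (hj : ∀ i, a i ^ 2 ≤ a j ^ 2)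
    {s : Set (EuclideanSpace ℝ ι)} (hs : IsCompact s) :
    ⨍ y in s, weightedRatio a k y ≤ √(a j ^ 2 + 1) :=
  setAverage_le_of_forall_le hs.measure_lt_top.ne
    ((continuous_weightedRatio a hk).continuousOn.integrableOn_compact hs) (sqrt_nonneg _)
    fun y _ => weightedRatio_le a hk hj y

theorem one_lt_setAverage_weightedRatio_closedBall [Nonempty ι] (ha : ∀ i, a i ≠ 0) (hk : 0 < k)
    {r : ℝ} (hr : 0 < r) : 1 < ⨍ y in closedBall 0 r, weightedRatio a k y :=
  lt_setAverage_of_ae_lt (measure_closedBall_pos volume 0 hr).ne' measure_closedBall_lt_top.ne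
    ((continuous_weightedRatio a hk).continuousOn.integrableOn_compact (isCompact_closedBall 0 r))
    ((volume.ae_ne 0).mono fun _ hy _ => one_lt_weightedRatio a ha hk hy)

end WeightedRatio

/-- There is no function `θ` of `h` alone such that the average of
`H_k(y) = √(Σ(aᵢ²+1)yᵢ²+k)/√(|y|²+k)` over the ellipsoid
`D_q(k,h) = {y : (|q|²+k)(|y|²+k) ≤ (⟨q,y⟩+√(k(k+h)))²}` equals `H_k(q)·θ(h)` for all
`k, h > 0` and all `q`; hence `g(x,z) = z² - Σaᵢ²xᵢ²` does not satisfy Condition (S*). -/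
theorem stmt17 (n : ℕ) (hn : 1 ≤ n) (a : Fin n → ℝ) (ha : ∀ i, 0 < a i)
    (H : ℝ → EuclideanSpace ℝ (Fin n) → ℝ)
    (hH : ∀ k y, H k y = Real.sqrt ((∑ i, ((a i) ^ 2 + 1) * (y i) ^ 2) + k) /
        Real.sqrt ((∑ i, (y i) ^ 2) + k))
    (D : EuclideanSpace ℝ (Fin n) → ℝ → ℝ → Set (EuclideanSpace ℝ (Fin n)))
    (hD : ∀ q k h, D q k h =
        {y | (‖q‖ ^ 2 + k) * (‖y‖ ^ 2 + k) ≤ (⟪q, y⟫ + Real.sqrt (k * (k + h))) ^ 2}) :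
    ¬ ∃ θ : ℝ → ℝ, ∀ k h : ℝ, 0 < k → 0 < h → ∀ q : EuclideanSpace ℝ (Fin n),
        (1 / (volume (D q k h)).toReal) * (∫ y in D q k h, H k y) = H k q * θ h := by
  rintro ⟨θ, hθ⟩
  have : Nonempty (Fin n) := ⟨⟨0, hn⟩⟩
  have average_eq (q : EuclideanSpace ℝ (Fin n)) :
      ⨍ y in ellipsoidDomain q 1 1, weightedRatio a 1 y = weightedRatio a 1 q * θ 1 := by
    have hH1 : H 1 = weightedRatio a 1 := funext (hH 1)
    rw [← one_div_mul_setIntegral_eq_setAverage, ellipsoidDomain, ← hD, ← hH1]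
    exact hθ 1 1 one_pos one_pos q
  have hθ1 : 1 < θ 1 := by
    have h0 := average_eq 0
    rw [ellipsoidDomain_zero one_pos zero_le_one, sqrt_one, weightedRatio_zero a one_pos,
      one_mul] at h0
    exact h0 ▸ one_lt_setAverage_weightedRatio_closedBall a (fun i => (ha i).ne') one_pos one_pos
  obtain ⟨j, hj⟩ := Finite.exists_max fun i => a i ^ 2
  have hbound (q : EuclideanSpace ℝ (Fin n)) : weightedRatio a 1 q * θ 1 ≤ √(a j ^ 2 + 1) :=
    average_eq q ▸ setAverage_weightedRatio_le a one_pos hj (isCompact_ellipsoidDomain q one_pos 1)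
  have hlim := (tendsto_weightedRatio_single a (k := 1) j).mul_const (θ 1)
  obtain ⟨t, ht⟩ := (hlim.eventually (lt_mem_nhds
    (lt_mul_of_one_lt_right (sqrt_pos.2 (by positivity)) hθ1))).exists
  exact (hbound _).not_gt ht
end
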